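/- arXiv:2312.01603 — 6 statements merged into one kernel-verified Lean document; each statement's English description precedes it below -/
import Mathlib

section
/- Let D ⊆ ℝ^m be a nonempty convex set, a : D → ℝ a differentiable convex function, and b : D → ℝ an affine function with b(x) > 0 for all x ∈ D. Then the function f(x) = a(x)/b(x) is pseudoconvex on D: for all x, y ∈ D, if f(x) > f(y) then ⟨∇f(x), y − x⟩ < 0. -/
/-!
Put `c = a x / b x`. Because `b` is affine, `g = a - c • b` is convex; it vanishes at `x` and is
negative at `y`. Near `x` we have `g = (a / b - c) * b`, whose first factor vanishes at `x`, so
`∇g(x) = b(x) ∇(a / b)(x)`. The gradient inequality for `g` then reads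
`b(x) ⟪∇(a / b)(x), y - x⟫ ≤ g y - g x < 0`.
-/

open scoped RealInnerProductSpace

open Set

variable {E : Type*} [NormedAddCommGroup E] [NormedSpace ℝ E]

theorem ConvexOn.le_sub_of_hasFDerivAt {s : Set E} {g : E → ℝ} {g' : E →L[ℝ] ℝ} {x y : E}
    (hg : ConvexOn ℝ s g) (hx : x ∈ s) (hy : y ∈ s) (hg' : HasFDerivAt g g' x) :
    g' (y - x) ≤ g y - g x := by
  let φ : ℝ →ᵃ[ℝ] E := AffineMap.lineMap x y
  have hφ_maps : MapsTo φ (Icc 0 1) s := by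
    simpa only [φ, mapsTo_iff_image_subset, ← segment_eq_image_lineMap]
      using hg.1.segment_subset hx hy
  have hφ_conv : ConvexOn ℝ (Icc 0 1) (g ∘ φ) :=
    (hg.comp_affineMap φ).subset hφ_maps (convex_Icc 0 1)
  have hφ_deriv : HasDerivAt (g ∘ φ) (g' (y - x)) 0 := by
    have hline : HasDerivAt φ (y - x) 0 := AffineMap.hasDerivAt_lineMap (a := x) (b := y)
    rw [← AffineMap.lineMap_apply_zero (k := ℝ) x y] at hg'
    exact hg'.comp_hasDerivAt 0 hline
  simpa [slope_def_field, φ] using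
    hφ_conv.le_slope_of_hasDerivAt (left_mem_Icc.2 zero_le_one) (right_mem_Icc.2 zero_le_one)
      zero_lt_one hφ_deriv

theorem ConvexOn.apply_sub_neg_of_hasFDerivAt_div {s : Set E} {a b : E → ℝ} {ℓ f' : E →L[ℝ] ℝ} {β : ℝ}
    {x y : E} (ha : ConvexOn ℝ s a) (hb : ∀ z, b z = ℓ z + β) (hx : x ∈ s) (hy : y ∈ s)
    (hbx : 0 < b x) (hby : 0 < b y) (hf : HasFDerivAt (fun z => a z / b z) f' x)
    (hxy : a y / b y < a x / b x) : f' (y - x) < 0 := by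
  set c := a x / b x with hc
  have hb_deriv : HasFDerivAt b ℓ x :=
    (ℓ.hasFDerivAt.add_const β).congr_of_eventuallyEq (.of_forall hb)
  have hg_conv : ConvexOn ℝ s (fun z => a z - c * b z) := by
    have : ConcaveOn ℝ s (fun z => (c • ℓ) z + c * β) :=
      ((c • ℓ).toLinearMap.concaveOn ha.1).add_const _
    refine (ha.sub this).congr fun z _ => ?_
    simp [hb, mul_add]
  have hg_deriv : HasFDerivAt (fun z => a z - c * b z) (b x • f') x := by
    have hprod := (hf.sub_const c).mul hb_deriv
    simp only [hc, sub_self, zero_smul, zero_add] at hprod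
    refine hprod.congr_of_eventuallyEq ?_
    filter_upwards [hb_deriv.continuousAt.eventually (lt_mem_nhds hbx)] with z hz
    rw [Pi.mul_apply, hc]
    field_simp
  have hgx : a x - c * b x = 0 := by rw [hc, div_mul_cancel₀ _ hbx.ne', sub_self]
  have hgy : a y - c * b y < 0 := by rw [div_lt_iff₀ hby] at hxy; linarith
  have hgrad := hg_conv.le_sub_of_hasFDerivAt hx hy hg_deriv
  simp only [smul_apply, smul_eq_mul] at hgrad
  exact neg_of_mul_neg_right (by linarith) hbx.le

theorem ratio_pseudoconvex_general {m : ℕ} (D : Set (EuclideanSpace ℝ (Fin m)))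
    (a b : EuclideanSpace ℝ (Fin m) → ℝ)
    (ha_conv : ConvexOn ℝ D a)
    (w : EuclideanSpace ℝ (Fin m)) (β : ℝ)
    (hb : ∀ x, b x = ⟪w, x⟫ + β)
    (hb_pos : ∀ x ∈ D, 0 < b x)
    (f' : EuclideanSpace ℝ (Fin m) → EuclideanSpace ℝ (Fin m))
    (hf_diff : ∀ x ∈ D, HasGradientAt (fun z => a z / b z) (f' x) x) :
    ∀ x ∈ D, ∀ y ∈ D, a x / b x > a y / b y → ⟪f' x, y - x⟫ < 0 :=
  fun x hx y hy hxy => ha_conv.apply_sub_neg_of_hasFDerivAt_div (ℓ := innerSL ℝ w) hb hx hy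
    (hb_pos x hx) (hb_pos y hy) (hf_diff x hx).hasFDerivAt hxy

/-- Pseudoconvexity of the ratio of a differentiable convex function and a positive
affine function: if `f = a / b` with `a` convex differentiable and `b` affine positive
on a nonempty convex set `D`, then `f x > f y` implies `⟪∇f(x), y - x⟫ < 0`. -/
theorem ratio_pseudoconvex {m : ℕ} (D : Set (EuclideanSpace ℝ (Fin m)))
    (hDne : D.Nonempty) (hDconv : Convex ℝ D)
    (a b : EuclideanSpace ℝ (Fin m) → ℝ)
    (a' : EuclideanSpace ℝ (Fin m) → EuclideanSpace ℝ (Fin m))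
    (ha_conv : ConvexOn ℝ D a)
    (ha_diff : ∀ x ∈ D, HasGradientAt a (a' x) x)
    (w : EuclideanSpace ℝ (Fin m)) (β : ℝ)
    (hb : ∀ x, b x = ⟪w, x⟫ + β)
    (hb_pos : ∀ x ∈ D, 0 < b x)
    (f' : EuclideanSpace ℝ (Fin m) → EuclideanSpace ℝ (Fin m))
    (hf_diff : ∀ x ∈ D, HasGradientAt (fun z => a z / b z) (f' x) x) :
    ∀ x ∈ D, ∀ y ∈ D, a x / b x > a y / b y → ⟪f' x, y - x⟫ < 0 :=
  ratio_pseudoconvex_general D a b ha_conv w β hb hb_pos f' hf_diff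
end

section
/- Let A, B be affine maps ℝ^m → S^n with B(x) ≻ 0 on a convex domain D. Fix x ∈ D, let λ* = λ₁(A(x), B(x)), let v₁,…,v_t be generalized eigenvectors for λ* with v_iᵀ B(x) v_j = δ_ij, V = [v₁,…,v_t], and let U be a t×t symmetric positive semidefinite matrix with trace 1. If y ∈ D satisfies λ₁(A(y), B(y)) < λ*, then ⟨[⟨U, Vᵀ(A_e − λ* B_e)V⟩]_{e=1}^m, y − x⟩ = ⟨U, Vᵀ(A(y) − λ* B(y))V⟩ < 0. -/
/-!
Because `A - λ* B` is affine and kills the columns of `V` at `x`, `Vᵀ (A(y) - λ* B(y)) V` equals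
`∑ₑ (yₑ - xₑ) Vᵀ (Aₑ - λ* Bₑ) V`, which gives the identity. For the sign, write `B(y) = C * C`
with `C` self-adjoint and invertible: every point of the spectrum of `C⁻¹ A(y) C⁻¹` is a
generalized eigenvalue of `(A(y), B(y))`, hence `< λ*`, so
`λ* B(y) - A(y) = C (λ* - C⁻¹ A(y) C⁻¹) C` is positive definite. Since `Vᵀ B(x) V = 1`, `V` is
injective and `P = Vᵀ (λ* B(y) - A(y)) V` is positive definite too; finally
`tr (U P) = tr (C' U C') > 0` for `P = C' * C'`, as `U ⪰ 0` is nonzero.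
-/

open Matrix

open scoped MatrixOrder

namespace Matrix

variable {n : Type*} [Fintype n]

def generalizedEigenvalues (A B : Matrix n n ℝ) : Set ℝ :=
  {r | ∃ w : n → ℝ, w ≠ 0 ∧ A *ᵥ w = r • (B *ᵥ w)}

theorem PosDef.exists_isUnit_isSelfAdjoint_mul_self_eq {B : Matrix n n ℝ} [DecidableEq n]
    (hB : B.PosDef) : ∃ C : Matrix n n ℝ, IsUnit C ∧ IsSelfAdjoint C ∧ C * C = B := by
  have hCC : CFC.sqrt B * CFC.sqrt B = B := CFC.sqrt_mul_sqrt_self B hB.posSemidef.nonneg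
  exact ⟨CFC.sqrt B, isUnit_of_mul_isUnit_right (hCC ▸ hB.isUnit),
    (CFC.sqrt_nonneg B).isSelfAdjoint, hCC⟩

theorem spectrum_inv_mul_mul_inv_subset_generalizedEigenvalues [DecidableEq n]
    {A C : Matrix n n ℝ} (hC : IsUnit C) :
    spectrum ℝ (C⁻¹ * A * C⁻¹) ⊆ generalizedEigenvalues A (C * C) := by
  intro r hr
  rw [← spectrum_toLin', ← Module.End.hasEigenvalue_iff_mem_spectrum] at hr
  obtain ⟨b, hb⟩ := hr.exists_hasEigenvector
  have hSb := hb.apply_eq_smul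
  rw [toLin'_apply] at hSb
  have hCinv : C * C⁻¹ = 1 := mul_nonsing_inv C ((isUnit_iff_isUnit_det C).mp hC)
  refine ⟨C⁻¹ *ᵥ b, fun h => hb.2 ?_, ?_⟩
  · simpa [mulVec_mulVec, hCinv] using congrArg (C *ᵥ ·) h
  · have hASb := congrArg (C *ᵥ ·) hSb
    simp only [mulVec_mulVec, ← Matrix.mul_assoc, hCinv, Matrix.one_mul, mulVec_smul] at hASb
    rw [mulVec_mulVec, hASb, mulVec_mulVec, Matrix.mul_assoc, hCinv, Matrix.mul_one]

theorem posDef_algebraMap_sub_of_spectrum_lt [DecidableEq n] {S : Matrix n n ℝ}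
    (hS : IsSelfAdjoint S) {μ : ℝ} (hμ : ∀ r ∈ spectrum ℝ S, r < μ) :
    (algebraMap ℝ _ μ - S).PosDef := by
  rw [← isStrictlyPositive_iff_posDef, StarOrderedRing.isStrictlyPositive_iff_spectrum_pos
    (R := ℝ) _ ((IsSelfAdjoint.algebraMap _ (.all μ)).sub hS), ← spectrum.singleton_sub_eq]
  rintro _ ⟨_, rfl, r, hr, rfl⟩
  simpa using hμ r hr

theorem posDef_smul_sub_of_generalizedEigenvalues_lt [DecidableEq n] {A B : Matrix n n ℝ}
    (hA : A.IsHermitian) (hB : B.PosDef) {μ : ℝ}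
    (hμ : ∀ r ∈ generalizedEigenvalues A B, r < μ) : (μ • B - A).PosDef := by
  obtain ⟨C, hC, hCsa, rfl⟩ := hB.exists_isUnit_isSelfAdjoint_mul_self_eq
  have hdet := (isUnit_iff_isUnit_det C).mp hC
  have hS : IsSelfAdjoint (C⁻¹ * A * C⁻¹) := by
    have hstar : star C⁻¹ = C⁻¹ := by
      rw [star_eq_conjTranspose, conjTranspose_nonsing_inv, ← star_eq_conjTranspose, hCsa.star_eq]
    simpa only [hstar] using hA.isSelfAdjoint.conjugate' C⁻¹
  have hconj : μ • (C * C) - A = star C * (algebraMap ℝ _ μ - C⁻¹ * A * C⁻¹) * C := by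
    rw [hCsa.star_eq, Algebra.algebraMap_eq_smul_one, Matrix.mul_sub, Matrix.sub_mul,
      Matrix.mul_smul, Matrix.smul_mul, Matrix.mul_one, ← Matrix.mul_assoc, ← Matrix.mul_assoc,
      mul_nonsing_inv C hdet, Matrix.one_mul, Matrix.mul_assoc, nonsing_inv_mul C hdet,
      Matrix.mul_one]
  rw [hconj, hC.posDef_star_left_conjugate_iff]
  exact posDef_algebraMap_sub_of_spectrum_lt hS fun r hr =>
    hμ r (spectrum_inv_mul_mul_inv_subset_generalizedEigenvalues hC hr)

theorem PosSemidef.trace_mul_pos_of_posDef [DecidableEq n] {U P : Matrix n n ℝ}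
    (hU : U.PosSemidef) (hU0 : U ≠ 0) (hP : P.PosDef) : 0 < (U * P).trace := by
  obtain ⟨C, hC, hCsa, rfl⟩ := hP.exists_isUnit_isSelfAdjoint_mul_self_eq
  have hCUC := hU.conjTranspose_mul_mul_same C
  have htr : (U * (C * C)).trace = (Cᴴ * U * C).trace := by
    rw [← star_eq_conjTranspose, hCsa.star_eq, ← Matrix.mul_assoc, trace_mul_cycle]
  rw [htr]
  refine hCUC.trace_nonneg.lt_of_ne' fun h => hU0 ?_
  rwa [hCUC.trace_eq_zero_iff, ← star_eq_conjTranspose, hCsa.star_eq, hC.mul_left_eq_zero,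
    hC.mul_right_eq_zero] at h

theorem mul_of_eq_zero_of_mulVec_eq_zero {ι : Type*} {M : Matrix n n ℝ} {v : ι → n → ℝ}
    (h : ∀ j, M *ᵥ v j = 0) : M * (of fun i j => v j i) = 0 := by
  ext i j
  simpa [mulVec, dotProduct, mul_apply] using congrFun (h j) i

theorem transpose_of_mul_mul_of_apply {ι : Type*} (M : Matrix n n ℝ) (v : ι → n → ℝ) (i j : ι) :
    ((of fun i j => v j i)ᵀ * M * of fun i j => v j i) i j = v i ⬝ᵥ (M *ᵥ v j) := by
  simp only [mul_apply, transpose_apply, of_apply, mulVec, dotProduct, Finset.mul_sum,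
    Finset.sum_mul]
  rw [Finset.sum_comm]
  exact Finset.sum_congr rfl fun _ _ => Finset.sum_congr rfl fun _ _ => by ring

theorem mulVec_injective_of_mul_eq_one {m : Type*} [Fintype m] [DecidableEq m]
    {V : Matrix n m ℝ} {W : Matrix m n ℝ} (h : W * V = 1) : Function.Injective V.mulVec :=
  fun a b hab => by simpa [mulVec_mulVec, h] using congrArg (W *ᵥ ·) hab

end Matrix

theorem sub_eq_sum_sub_smul_of_affine {ι R E : Type*} [Fintype ι] [Ring R] [AddCommGroup E]
    [Module R E] {f : (ι → R) → E} {f₀ : E} {fₑ : ι → E} (hf : ∀ z, f z = f₀ + ∑ e, z e • fₑ e)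
    (x y : ι → R) : f y - f x = ∑ e, (y e - x e) • fₑ e := by
  simp only [hf, add_sub_add_left_eq_sub, ← Finset.sum_sub_distrib, sub_smul]

theorem sub_smul_of_affine {ι R E : Type*} [Fintype ι] [CommRing R] [AddCommGroup E]
    [Module R E] {f g : (ι → R) → E} {f₀ g₀ : E} {fₑ gₑ : ι → E}
    (hf : ∀ z, f z = f₀ + ∑ e, z e • fₑ e) (hg : ∀ z, g z = g₀ + ∑ e, z e • gₑ e) (μ : R)
    (z : ι → R) : f z - μ • g z = (f₀ - μ • g₀) + ∑ e, z e • (fₑ e - μ • gₑ e) := by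
  simp only [hf, hg, smul_add, Finset.smul_sum, smul_sub, smul_comm μ, Finset.sum_sub_distrib]
  abel

theorem Matrix.trace_mul_transpose_mul_mul_of_affine {ι n t : Type*} [Fintype ι] [Fintype n]
    [Fintype t] {f : (ι → ℝ) → Matrix n n ℝ} {f₀ : Matrix n n ℝ} {fₑ : ι → Matrix n n ℝ}
    (hf : ∀ z, f z = f₀ + ∑ e, z e • fₑ e) {x : ι → ℝ} {V : Matrix n t ℝ} (hV : f x * V = 0)
    (y : ι → ℝ) (U : Matrix t t ℝ) :
    (U * (Vᵀ * f y * V)).trace = ∑ e, (U * (Vᵀ * fₑ e * V)).trace * (y e - x e) := by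
  rw [← sub_add_cancel (f y) (f x), sub_eq_sum_sub_smul_of_affine hf, Matrix.mul_add,
    Matrix.add_mul, Matrix.mul_assoc Vᵀ (f x), hV, Matrix.mul_zero, add_zero]
  simp only [Matrix.mul_sum, Matrix.sum_mul, Matrix.mul_smul, Matrix.smul_mul, trace_sum,
    trace_smul, smul_eq_mul, mul_comm]

theorem clarke_subgradient_pseudoconvex_ineq_general {m n t : ℕ}
    (A0 B0 : Matrix (Fin n) (Fin n) ℝ) (Ae Be : Fin m → Matrix (Fin n) (Fin n) ℝ)
    (A B : (Fin m → ℝ) → Matrix (Fin n) (Fin n) ℝ)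
    (hA : ∀ z, A z = A0 + ∑ e, z e • Ae e)
    (hB : ∀ z, B z = B0 + ∑ e, z e • Be e)
    (hAsymm : ∀ z, (A z).IsSymm)
    (D : Set (Fin m → ℝ))
    (hBpos : ∀ z ∈ D, (B z).PosDef)
    (x y : Fin m → ℝ) (hy : y ∈ D)
    (lamstar : ℝ)
    (v : Fin t → (Fin n → ℝ))
    (heig : ∀ i, A x *ᵥ v i = lamstar • (B x *ᵥ v i))
    (horth : ∀ i j, v i ⬝ᵥ (B x *ᵥ v j) = if i = j then (1 : ℝ) else 0)
    (V : Matrix (Fin n) (Fin t) ℝ) (hV : V = Matrix.of fun i j => v j i)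
    (U : Matrix (Fin t) (Fin t) ℝ) (hU : U.PosSemidef) (hUtr : U.trace = 1)
    (lamy : ℝ)
    (hlamy :
      IsGreatest {r : ℝ | ∃ w : Fin n → ℝ, w ≠ 0 ∧ A y *ᵥ w = r • (B y *ᵥ w)} lamy)
    (hlt : lamy < lamstar) :
    (∑ e, (U * (Vᵀ * (Ae e - lamstar • Be e) * V)).trace * (y e - x e)
        = (U * (Vᵀ * (A y - lamstar • B y) * V)).trace) ∧
    (U * (Vᵀ * (A y - lamstar • B y) * V)).trace < 0 := by
  have hker : (A x - lamstar • B x) * V = 0 := hV ▸ mul_of_eq_zero_of_mulVec_eq_zero fun j => by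
    rw [sub_mulVec, smul_mulVec, heig, sub_self]
  have hgram : Vᵀ * B x * V = 1 := by
    ext i j
    rw [hV, transpose_of_mul_mul_of_apply, horth, one_apply]
  have hgap_y : (lamstar • B y - A y).PosDef :=
    posDef_smul_sub_of_generalizedEigenvalues_lt (isHermitian_iff_isSymm.mpr (hAsymm y))
      (hBpos y hy) fun r hr => (hlamy.2 hr).trans_lt hlt
  have hgap : (Vᵀ * (lamstar • B y - A y) * V).PosDef := by
    simpa only [conjTranspose_eq_transpose_of_trivial] using
      hgap_y.conjTranspose_mul_mul_same (mulVec_injective_of_mul_eq_one hgram)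
  have hU0 : U ≠ 0 := by
    rintro rfl
    simp at hUtr
  refine ⟨(trace_mul_transpose_mul_mul_of_affine (sub_smul_of_affine hA hB lamstar) hker y U).symm,
    ?_⟩
  have hpos := hU.trace_mul_pos_of_posDef hU0 hgap
  rw [← neg_sub, Matrix.mul_neg, Matrix.neg_mul, Matrix.mul_neg, trace_neg] at hpos
  linarith

/-- Key inequality for pseudoconvexity of the maximum generalized eigenvalue:
with `A, B` affine, `λ* = λ₁(A(x), B(x))`, `V` a matrix of `B(x)`-orthonormal
generalized eigenvectors for `λ*`, and `U ⪰ 0` with trace `1`, if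
`λ₁(A(y), B(y)) < λ*` then
`⟨[⟨U, Vᵀ(A_e - λ*B_e)V⟩]ₑ, y - x⟩ = ⟨U, Vᵀ(A(y) - λ*B(y))V⟩ < 0`. -/
theorem clarke_subgradient_pseudoconvex_ineq {m n t : ℕ}
    (A0 B0 : Matrix (Fin n) (Fin n) ℝ) (Ae Be : Fin m → Matrix (Fin n) (Fin n) ℝ)
    (A B : (Fin m → ℝ) → Matrix (Fin n) (Fin n) ℝ)
    (hA : ∀ z, A z = A0 + ∑ e, z e • Ae e)
    (hB : ∀ z, B z = B0 + ∑ e, z e • Be e)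
    (hAsymm : ∀ z, (A z).IsSymm) (hBsymm : ∀ z, (B z).IsSymm)
    (D : Set (Fin m → ℝ)) (hD : Convex ℝ D)
    (hBpos : ∀ z ∈ D, (B z).PosDef)
    (x y : Fin m → ℝ) (hx : x ∈ D) (hy : y ∈ D)
    (lamstar : ℝ)
    (hlamstar :
      IsGreatest {r : ℝ | ∃ w : Fin n → ℝ, w ≠ 0 ∧ A x *ᵥ w = r • (B x *ᵥ w)} lamstar)
    (v : Fin t → (Fin n → ℝ))
    (heig : ∀ i, A x *ᵥ v i = lamstar • (B x *ᵥ v i))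
    (horth : ∀ i j, v i ⬝ᵥ (B x *ᵥ v j) = if i = j then (1 : ℝ) else 0)
    (V : Matrix (Fin n) (Fin t) ℝ) (hV : V = Matrix.of fun i j => v j i)
    (U : Matrix (Fin t) (Fin t) ℝ) (hU : U.PosSemidef) (hUtr : U.trace = 1)
    (lamy : ℝ)
    (hlamy :
      IsGreatest {r : ℝ | ∃ w : Fin n → ℝ, w ≠ 0 ∧ A y *ᵥ w = r • (B y *ᵥ w)} lamy)
    (hlt : lamy < lamstar) :
    (∑ e, (U * (Vᵀ * (Ae e - lamstar • Be e) * V)).trace * (y e - x e)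
        = (U * (Vᵀ * (A y - lamstar • B y) * V)).trace) ∧
    (U * (Vᵀ * (A y - lamstar • B y) * V)).trace < 0 :=
  clarke_subgradient_pseudoconvex_ineq_general A0 B0 Ae Be A B hA hB hAsymm D hBpos x y hy lamstar v
    heig horth V hV U hU hUtr lamy hlamy hlt
end

section
/- Every locally Lipschitz pseudoconvex function on a convex set is quasiconvex. -/
open scoped RealInnerProductSpace

/-- The Clarke generalized directional derivative of `f` at `x` in direction `d`. -/
noncomputable def clarkeDirDeriv {m : ℕ} (f : EuclideanSpace ℝ (Fin m) → ℝ)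
    (x d : EuclideanSpace ℝ (Fin m)) : ℝ :=
  Filter.limsup (fun p : EuclideanSpace ℝ (Fin m) × ℝ => (f (p.1 + p.2 • d) - f p.1) / p.2)
    ((nhds x) ×ˢ (nhdsWithin 0 (Set.Ioi 0)))

/-- The Clarke subdifferential of `f` at `x`. -/
def clarkeSubdiff {m : ℕ} (f : EuclideanSpace ℝ (Fin m) → ℝ)
    (x : EuclideanSpace ℝ (Fin m)) : Set (EuclideanSpace ℝ (Fin m)) :=
  {g | ∀ d, ⟪g, d⟫ ≤ clarkeDirDeriv f x d}

/-!
Since `f` is locally Lipschitz, the Clarke directional derivative `d ↦ f°(z; d)` is a finite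
sublinear function, so by Hahn–Banach it dominates a linear functional: `∂f(z)` is nonempty.
If `z = λx + (1-λ)y` had `f z > max (f x) (f y)`, pseudoconvexity applied to any `g ∈ ∂f(z)` would
make both `⟪g, x - z⟫` and `⟪g, y - z⟫` negative, although `λ(x - z) + (1-λ)(y - z) = 0`.
-/

open Filter Topology

section ClarkeQuotient

variable {E : Type*} [NormedAddCommGroup E] [NormedSpace ℝ E]

noncomputable def clarkeQuotient (f : E → ℝ) (d : E) (p : E × ℝ) : ℝ :=
  (f (p.1 + p.2 • d) - f p.1) / p.2

lemma tendsto_add_smul_nhds_prod_nhdsGT (x d : E) :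
    Tendsto (fun p : E × ℝ => p.1 + p.2 • d) (𝓝 x ×ˢ 𝓝[>] 0) (𝓝 x) := by
  have hcont : Tendsto (fun p : E × ℝ => p.1 + p.2 • d) (𝓝 x ×ˢ 𝓝 0) (𝓝 (x + (0 : ℝ) • d)) := by
    rw [← nhds_prod_eq]
    exact (continuous_fst.add (continuous_snd.smul continuous_const)).tendsto _
  simpa using hcont.mono_left (prod_mono le_rfl nhdsWithin_le_nhds)

lemma LocallyLipschitz.isBoundedUnder_abs_clarkeQuotient {f : E → ℝ} (hf : LocallyLipschitz f)
    (x d : E) : (𝓝 x ×ˢ 𝓝[>] 0).IsBoundedUnder (· ≤ ·) fun p => |clarkeQuotient f d p| := by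
  obtain ⟨K, t, ht, hK⟩ := hf x
  refine isBoundedUnder_of_eventually_le (a := K * ‖d‖) ?_
  filter_upwards [tendsto_fst.eventually ht, (tendsto_add_smul_nhds_prod_nhdsGT x d).eventually ht,
    eventually_mem_nhdsWithin.prod_inr (𝓝 x)] with ⟨u, s⟩ hu hus (hs : 0 < s)
  rw [clarkeQuotient, abs_div, abs_of_pos hs, div_le_iff₀ hs]
  calc |f (u + s • d) - f u| = dist (f (u + s • d)) (f u) := (Real.dist_eq _ _).symm
    _ ≤ K * dist (u + s • d) u := hK.dist_le_mul _ hus _ hu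
    _ = K * ‖d‖ * s := by
      rw [dist_eq_norm, add_sub_cancel_left, norm_smul, Real.norm_of_nonneg hs.le]; ring

lemma LocallyLipschitz.isBoundedUnder_clarkeQuotient {f : E → ℝ} (hf : LocallyLipschitz f)
    (x d : E) :
    (𝓝 x ×ˢ 𝓝[>] 0).IsBoundedUnder (· ≤ ·) (clarkeQuotient f d) ∧
      (𝓝 x ×ˢ 𝓝[>] 0).IsBoundedUnder (· ≥ ·) (clarkeQuotient f d) :=
  isBoundedUnder_le_abs.1 (hf.isBoundedUnder_abs_clarkeQuotient x d)

lemma LocallyLipschitz.limsup_clarkeQuotient_comp_le {f : E → ℝ} (hf : LocallyLipschitz f)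
    {x d : E} {φ : E × ℝ → E × ℝ} (hφ : Tendsto φ (𝓝 x ×ˢ 𝓝[>] 0) (𝓝 x ×ˢ 𝓝[>] 0)) :
    limsup (clarkeQuotient f d ∘ φ) (𝓝 x ×ˢ 𝓝[>] 0) ≤
      limsup (clarkeQuotient f d) (𝓝 x ×ˢ 𝓝[>] 0) := by
  obtain ⟨hle, hge⟩ := hf.isBoundedUnder_clarkeQuotient x d
  exact hφ.limsup_comp_le_limsup (hge.mono (map_mono hφ)).isCoboundedUnder_le hle

end ClarkeQuotient

section ClarkeDirDeriv

variable {m : ℕ}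

lemma clarkeDirDeriv_eq_limsup (f : EuclideanSpace ℝ (Fin m) → ℝ) (x d : EuclideanSpace ℝ (Fin m)) :
    clarkeDirDeriv f x d = limsup (clarkeQuotient f d) (𝓝 x ×ˢ 𝓝[>] 0) :=
  rfl

lemma LocallyLipschitz.clarkeDirDeriv_add_le {f : EuclideanSpace ℝ (Fin m) → ℝ}
    (hf : LocallyLipschitz f) (x d₁ d₂ : EuclideanSpace ℝ (Fin m)) :
    clarkeDirDeriv f x (d₁ + d₂) ≤ clarkeDirDeriv f x d₁ + clarkeDirDeriv f x d₂ := by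
  simp only [clarkeDirDeriv_eq_limsup]
  set F := 𝓝 x ×ˢ 𝓝[>] (0 : ℝ)
  let φ : EuclideanSpace ℝ (Fin m) × ℝ → EuclideanSpace ℝ (Fin m) × ℝ :=
    fun p => (p.1 + p.2 • d₁, p.2)
  have hφ : Tendsto φ F F := (tendsto_add_smul_nhds_prod_nhdsGT x d₁).prodMk tendsto_snd
  have hsplit : clarkeQuotient f (d₁ + d₂) = clarkeQuotient f d₁ + clarkeQuotient f d₂ ∘ φ := by
    ext ⟨u, s⟩
    simp only [clarkeQuotient, φ, Pi.add_apply, Function.comp_apply, ← add_div, smul_add,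
      ← add_assoc]
    ring
  obtain ⟨hle₁, hge₁⟩ := hf.isBoundedUnder_clarkeQuotient x d₁
  obtain ⟨hle₂, hge₂⟩ := hf.isBoundedUnder_clarkeQuotient x d₂
  calc limsup (clarkeQuotient f (d₁ + d₂)) F
      ≤ limsup (clarkeQuotient f d₁) F + limsup (clarkeQuotient f d₂ ∘ φ) F := by
        rw [hsplit]
        exact limsup_add_le hge₁ hle₁ (hφ.isBoundedUnder_comp hge₂).isCoboundedUnder_le
          (hφ.isBoundedUnder_comp hle₂)
    _ ≤ limsup (clarkeQuotient f d₁) F + limsup (clarkeQuotient f d₂) F :=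
        add_le_add le_rfl (hf.limsup_clarkeQuotient_comp_le hφ)

lemma LocallyLipschitz.clarkeDirDeriv_smul_le {f : EuclideanSpace ℝ (Fin m) → ℝ}
    (hf : LocallyLipschitz f) (x d : EuclideanSpace ℝ (Fin m)) {c : ℝ} (hc : 0 < c) :
    clarkeDirDeriv f x (c • d) ≤ c * clarkeDirDeriv f x d := by
  simp only [clarkeDirDeriv_eq_limsup]
  set F := 𝓝 x ×ˢ 𝓝[>] (0 : ℝ)
  let ψ : EuclideanSpace ℝ (Fin m) × ℝ → EuclideanSpace ℝ (Fin m) × ℝ := fun p => (p.1, c * p.2)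
  have hscale : Tendsto (c * ·) (𝓝[>] (0 : ℝ)) (𝓝[>] 0) :=
    tendsto_nhdsWithin_iff.2
      ⟨by simpa using tendsto_nhdsWithin_of_tendsto_nhds ((continuous_const_mul c).tendsto 0),
        eventually_mem_nhdsWithin.mono fun t ht => mul_pos hc ht⟩
  have hψ : Tendsto ψ F F := tendsto_fst.prodMk (hscale.comp tendsto_snd)
  -- pointwise, also at `s = 0` where both sides are `0` by the convention `a / 0 = 0`
  have hrescale : clarkeQuotient f (c • d) = (c * ·) ∘ (clarkeQuotient f d ∘ ψ) := by
    ext ⟨u, s⟩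
    simp only [clarkeQuotient, ψ, Function.comp_apply, smul_smul, mul_comm s c]
    field_simp
  obtain ⟨hle, hge⟩ := hf.isBoundedUnder_clarkeQuotient x d
  calc limsup (clarkeQuotient f (c • d)) F
      = c * limsup (clarkeQuotient f d ∘ ψ) F := by
        rw [hrescale]
        exact ((monotone_mul_left_of_nonneg hc.le).map_limsup_of_continuousAt _
          (continuous_const_mul c).continuousAt (hψ.isBoundedUnder_comp hle)
          (hψ.isBoundedUnder_comp hge).isCoboundedUnder_le).symm
    _ ≤ c * limsup (clarkeQuotient f d) F :=
        mul_le_mul_of_nonneg_left (hf.limsup_clarkeQuotient_comp_le hψ) hc.le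

lemma LocallyLipschitz.clarkeDirDeriv_smul {f : EuclideanSpace ℝ (Fin m) → ℝ}
    (hf : LocallyLipschitz f) (x d : EuclideanSpace ℝ (Fin m)) {c : ℝ} (hc : 0 < c) :
    clarkeDirDeriv f x (c • d) = c * clarkeDirDeriv f x d := by
  refine le_antisymm (hf.clarkeDirDeriv_smul_le x d hc) ?_
  have h := hf.clarkeDirDeriv_smul_le x (c • d) (inv_pos.2 hc)
  rw [inv_smul_smul₀ hc.ne'] at h
  rwa [← le_inv_mul_iff₀ hc]

lemma LocallyLipschitz.clarkeSubdiff_nonempty {f : EuclideanSpace ℝ (Fin m) → ℝ}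
    (hf : LocallyLipschitz f) (x : EuclideanSpace ℝ (Fin m)) : (clarkeSubdiff f x).Nonempty := by
  have hzero : 0 ≤ clarkeDirDeriv f x 0 := by
    simpa using hf.clarkeDirDeriv_add_le x 0 0
  obtain ⟨g, -, hg⟩ := exists_extension_of_le_sublinear (LinearPMap.mk ⊥ 0)
    (clarkeDirDeriv f x) (fun c hc d => hf.clarkeDirDeriv_smul x d hc)
    (hf.clarkeDirDeriv_add_le x) (by rintro ⟨_, rfl⟩; exact hzero)
  refine ⟨(InnerProductSpace.toDual ℝ _).symm (LinearMap.toContinuousLinearMap g), fun d => ?_⟩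
  rw [InnerProductSpace.toDual_symm_apply]
  exact hg d

end ClarkeDirDeriv

/-- Every locally Lipschitz pseudoconvex function on a convex set is quasiconvex:
`f (λ x + (1-λ) y) ≤ max (f x) (f y)`. -/
theorem pseudoconvex_is_quasiconvex {m : ℕ}
    (f : EuclideanSpace ℝ (Fin m) → ℝ) (hf : LocallyLipschitz f)
    (D : Set (EuclideanSpace ℝ (Fin m))) (hDconv : Convex ℝ D)
    (hpseudo : ∀ x ∈ D, ∀ y ∈ D, ∀ g ∈ clarkeSubdiff f x, f x > f y → ⟪g, y - x⟫ < 0) :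
    ∀ x ∈ D, ∀ y ∈ D, ∀ lam : ℝ, lam ∈ Set.Icc (0 : ℝ) 1 →
      f (lam • x + (1 - lam) • y) ≤ max (f x) (f y) := by
  intro x hx y hy lam ⟨hlam₀, hlam₁⟩
  by_contra! hmax
  set z := lam • x + (1 - lam) • y
  have hz : z ∈ D := hDconv hx hy hlam₀ (sub_nonneg.2 hlam₁) (by ring)
  obtain ⟨g, hg⟩ := hf.clarkeSubdiff_nonempty z
  have hgx := hpseudo z hz x hx g hg ((le_max_left _ _).trans_lt hmax)
  have hgy := hpseudo z hz y hy g hg ((le_max_right _ _).trans_lt hmax)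
  have hneg : lam * ⟪g, x - z⟫ + (1 - lam) * ⟪g, y - z⟫ < 0 :=
    convex_Iio (0 : ℝ) hgx hgy hlam₀ (sub_nonneg.2 hlam₁) (by ring)
  have hcomb : lam • (x - z) + (1 - lam) • (y - z) = 0 := by simp only [z]; module
  rw [← real_inner_smul_right, ← real_inner_smul_right, ← inner_add_right, hcomb,
    inner_zero_right] at hneg
  exact hneg.false
end

section
/- Let t₁ = 0 and t₂, …, t_n ≥ 0, and μ > 0. Then (Σ_{i=1}^n t_i exp(−t_i/μ)) / (Σ_{i=1}^n exp(−t_i/μ)) ≤ (n−1)μ/e. -/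
lemma term_le {μ : ℝ} (hμ : 0 < μ) {x : ℝ} (hx : 0 ≤ x) :
    x * Real.exp (-x / μ) ≤ μ / Real.exp 1 := by
  have h1 : x / μ ≤ Real.exp (x / μ - 1) := by
    have := Real.add_one_le_exp (x / μ - 1)
    linarith
  have h2 : x * Real.exp (-x / μ) = μ * ((x / μ) * Real.exp (-(x / μ))) := by
    field_simp
  rw [h2]
  have h3 : (x / μ) * Real.exp (-(x / μ)) ≤ Real.exp (x / μ - 1) * Real.exp (-(x / μ)) :=
    mul_le_mul_of_nonneg_right h1 (Real.exp_pos _).le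
  rw [← Real.exp_add] at h3
  have : x / μ - 1 + -(x / μ) = -1 := by ring
  rw [this] at h3
  calc μ * ((x / μ) * Real.exp (-(x / μ))) ≤ μ * Real.exp (-1) :=
        mul_le_mul_of_nonneg_left h3 hμ.le
    _ = μ / Real.exp 1 := by rw [Real.exp_neg]; ring

/-- Smoothing error bound: if `t₁ = 0`, `tᵢ ≥ 0` and `μ > 0`, then
`(Σ tᵢ exp(-tᵢ/μ)) / (Σ exp(-tᵢ/μ)) ≤ (n-1) μ / e`. -/
theorem weighted_gap_bound {n : ℕ} (hn : 0 < n) (t : Fin n → ℝ)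
    (ht0 : t ⟨0, hn⟩ = 0) (ht : ∀ i, 0 ≤ t i) (μ : ℝ) (hμ : 0 < μ) :
    (∑ i, t i * Real.exp (-(t i) / μ)) / (∑ i, Real.exp (-(t i) / μ))
      ≤ ((n : ℝ) - 1) * μ / Real.exp 1 := by
  set i0 : Fin n := ⟨0, hn⟩
  have hden : (1 : ℝ) ≤ ∑ i, Real.exp (-(t i) / μ) := by
    calc (1 : ℝ) = Real.exp (-(t i0) / μ) := by rw [ht0]; simp
      _ ≤ ∑ i, Real.exp (-(t i) / μ) :=
        Finset.single_le_sum (f := fun i => Real.exp (-(t i) / μ)) (fun i _ => (Real.exp_pos _).le) (Finset.mem_univ i0)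
  have hnum : (∑ i, t i * Real.exp (-(t i) / μ)) ≤ ((n : ℝ) - 1) * μ / Real.exp 1 := by
    rw [← Finset.sum_erase_add _ _ (Finset.mem_univ i0), ht0]
    simp only [zero_mul, add_zero]
    calc ∑ i ∈ Finset.univ.erase i0, t i * Real.exp (-(t i) / μ)
        ≤ ∑ _i ∈ Finset.univ.erase i0, μ / Real.exp 1 :=
          Finset.sum_le_sum (fun i _ => term_le hμ (ht i))
      _ = ((n : ℝ) - 1) * μ / Real.exp 1 := by
          rw [Finset.sum_const, Finset.card_erase_of_mem (Finset.mem_univ i0)]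
          simp only [Finset.card_univ, Fintype.card_fin, nsmul_eq_mul]
          have : ((n - 1 : ℕ) : ℝ) = (n : ℝ) - 1 := by
            rw [Nat.cast_sub hn]; simp
          rw [this]; ring
  have hnumpos : 0 ≤ ∑ i, t i * Real.exp (-(t i) / μ) :=
    Finset.sum_nonneg fun i _ => mul_nonneg (ht i) (Real.exp_pos _).le
  calc (∑ i, t i * Real.exp (-(t i) / μ)) / (∑ i, Real.exp (-(t i) / μ))
      ≤ (∑ i, t i * Real.exp (-(t i) / μ)) / 1 :=
        div_le_div_of_nonneg_left hnumpos one_pos hden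
    _ = ∑ i, t i * Real.exp (-(t i) / μ) := div_one _
    _ ≤ _ := hnum
end

section
/- The function f : ℝ²_{>0} → ℝ given by f(x₁, x₂) = max{x₁/x₂, x₂/x₁} equals the maximum generalized eigenvalue λ₁(diag(x₁, x₂), diag(x₂, x₁)), and f is not Lipschitz continuous on [x_min, ∞)² for any x_min > 0. -/
open Matrix

/-- `f(x₁,x₂) = max{x₁/x₂, x₂/x₁}` is the maximum generalized eigenvalue of
`(diag(x₁,x₂), diag(x₂,x₁))` on the positive orthant, and `f` is not Lipschitz
continuous on `[x_min, ∞)²` for any `x_min > 0`. -/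
theorem maxRatio_genEig_not_lipschitz :
    (∀ x1 x2 : ℝ, 0 < x1 → 0 < x2 →
      IsGreatest {r : ℝ | ∃ v : Fin 2 → ℝ, v ≠ 0 ∧
        (Matrix.diagonal ![x1, x2]) *ᵥ v = r • ((Matrix.diagonal ![x2, x1]) *ᵥ v)}
        (max (x1 / x2) (x2 / x1))) ∧
    (∀ xmin : ℝ, 0 < xmin → ¬ ∃ K : NNReal,
      LipschitzOnWith K (fun p : ℝ × ℝ => max (p.1 / p.2) (p.2 / p.1))
        (Set.Ici xmin ×ˢ Set.Ici xmin)) := by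
  constructor
  · intro x1 x2 hx1 hx2
    constructor
    · rcases le_total (x1 / x2) (x2 / x1) with h | h
      · rw [max_eq_right h]
        refine ⟨![0, 1], ?_, ?_⟩
        · intro h0
          have := congrFun h0 1
          simp at this
        · funext i
          fin_cases i <;>
            simp [Matrix.mulVec_diagonal, div_mul_eq_mul_div, hx1.ne', hx2.ne',
              mul_div_assoc, div_self]
      · rw [max_eq_left h]
        refine ⟨![1, 0], ?_, ?_⟩
        · intro h0
          have := congrFun h0 0
          simp at this
        · funext i
          fin_cases i <;>
            simp [Matrix.mulVec_diagonal, div_mul_eq_mul_div, hx1.ne', hx2.ne',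
              mul_div_assoc, div_self]
    · rintro r ⟨v, hv, heq⟩
      have h0 := congrFun heq 0
      have h1 := congrFun heq 1
      simp [Matrix.mulVec_diagonal] at h0 h1
      rcases Function.ne_iff.mp hv with ⟨i, hi⟩
      fin_cases i
      · have hv0 : v 0 ≠ 0 := by simpa using hi
        have hxr : x1 = r * x2 := by
          have h0' : x1 * v 0 = (r * x2) * v 0 := by linarith [h0]
          exact mul_right_cancel₀ hv0 h0'
        have : r = x1 / x2 := by field_simp; linarith
        rw [this]; exact le_max_left _ _
      · have hv1 : v 1 ≠ 0 := by simpa using hi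
        have hxr : x2 = r * x1 := by
          have h1' : x2 * v 1 = (r * x1) * v 1 := by linarith [h1]
          exact mul_right_cancel₀ hv1 h1'
        have : r = x2 / x1 := by field_simp; linarith
        rw [this]; exact le_max_right _ _
  · rintro xmin hx ⟨K, hK⟩
    set t : ℝ := 2 * K * xmin ^ 2 + 2 * xmin with ht
    have hK0 : (0:ℝ) ≤ K := K.coe_nonneg
    have ht2 : 2 * xmin ≤ t := by nlinarith
    have htpos : xmin ≤ t := by nlinarith
    have hmem1 : ((xmin, t) : ℝ × ℝ) ∈ Set.Ici xmin ×ˢ Set.Ici xmin :=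
      Set.mem_prod.mpr ⟨Set.self_mem_Ici, htpos⟩
    have hmem2 : ((2 * xmin, t) : ℝ × ℝ) ∈ Set.Ici xmin ×ˢ Set.Ici xmin :=
      Set.mem_prod.mpr ⟨by simp; linarith, htpos⟩
    have hd := hK.dist_le_mul _ hmem1 _ hmem2
    have hdist : dist ((xmin, t) : ℝ × ℝ) (2 * xmin, t) = xmin := by
      rw [Prod.dist_eq]
      simp [Real.dist_eq, abs_of_nonpos, abs_of_nonneg, hx.le]
      rw [abs_of_nonpos (by linarith)]
      linarith
    have hf1 : max (xmin / t) (t / xmin) = t / xmin := by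
      apply max_eq_right
      have h1 : xmin / t ≤ 1 := by
        rw [div_le_one (by linarith)]; linarith
      have h2 : (1:ℝ) ≤ t / xmin := by
        rw [le_div_iff₀ hx]; linarith
      linarith
    have hf2 : max (2 * xmin / t) (t / (2 * xmin)) = t / (2 * xmin) := by
      apply max_eq_right
      have h1 : 2 * xmin / t ≤ 1 := by
        rw [div_le_one (by linarith)]; linarith
      have h2 : (1:ℝ) ≤ t / (2 * xmin) := by
        rw [le_div_iff₀ (by linarith)]; linarith
      linarith
    simp only [hdist] at hd
    have hd' : dist (max (xmin / t) (t / xmin)) (max (2*xmin / t) (t / (2*xmin))) ≤ K * xmin := hd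
    rw [hf1, hf2, Real.dist_eq] at hd'
    have hval : t / xmin - t / (2 * xmin) = t / (2 * xmin) := by
      field_simp; ring
    have hge : t / xmin - t / (2 * xmin) ≤ K * xmin := by
      calc t / xmin - t / (2 * xmin) ≤ |t / xmin - t / (2 * xmin)| := le_abs_self _
        _ ≤ K * xmin := hd'
    rw [hval] at hge
    have : t ≤ 2 * K * xmin ^ 2 := by
      rw [div_le_iff₀ (by linarith)] at hge
      nlinarith
    nlinarith
end

section
/- Let f : ℝ^m → ℝ be a (possibly nonsmooth) function, S ⊆ ℝ^m nonempty closed convex with diameter-squared Θ = max_{x,y∈S} ‖x−y‖², and suppose there are constants c₁ > 0, c₂ ≥ 0, M > 0 and vectors g^k with ‖g^k‖ ≤ M such that ⟨g^k, x* − x^k⟩ ≤ c₁(f(x*) − f(x^k)) + c₂ μ_k whenever f(x^k) > f(x*), where x* minimizes f over S. If x^{k+1} = Π_S(x^k − α_k g^k) with α_k = (1/M)(k+1)^{-1/2} and μ_k = μ₀(k+1)^{-1/2}, then for k ≥ 2, min_{j≤k} (f(x^j) − f(x*)) ≤ 2(MΘ + (2c₂μ₀ + M) log 3)/(c₁ √(k+2)).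 -/
/-!
Projection onto a convex set does not increase the distance to points of the set, so expanding
`‖x (i+1) - x⋆‖²` and using the assumed inequality gives, while `f (x i) > f x⋆`,
`(2 c₁ / √(i+1)) (f (x i) - f x⋆) ≤ M (‖x i - x⋆‖² - ‖x (i+1) - x⋆‖²) + (2 c₂ μ₀ + M) / (i+1)`.
Summing over the second half `⌊(k+1)/2⌋ ≤ i ≤ k` of the iterations, the distances telescope to at
most `M Θ` and the harmonic tail is at most `1 ≤ log 3`, while the at least `(k+1)/2` weights are
all at least `2 c₁ / √(k+1)`. Hence the gaps cannot all exceed the claimed bound.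
-/

open scoped RealInnerProductSpace

open Finset

section Projection

variable {E : Type*} [NormedAddCommGroup E] [InnerProductSpace ℝ E]

theorem sq_norm_sub_le_of_forall_dist_le {S : Set E} (hS : Convex ℝ S) {z v w : E}
    (hv : v ∈ S) (hw : w ∈ S) (hmin : ∀ u ∈ S, dist v z ≤ dist u z) :
    ‖v - w‖ ^ 2 ≤ ‖z - w‖ ^ 2 := by
  have hinf : ‖z - v‖ = ⨅ u : S, ‖z - u‖ := by
    have : Nonempty S := ⟨⟨v, hv⟩⟩
    have hbdd : BddBelow (Set.range fun u : S => ‖z - u‖) :=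
      ⟨0, by rintro _ ⟨u, rfl⟩; exact norm_nonneg _⟩
    refine le_antisymm (le_ciInf fun u => ?_) (ciInf_le hbdd ⟨v, hv⟩)
    simpa [dist_eq_norm, norm_sub_rev] using hmin u u.2
  have hvar : ⟪z - v, w - v⟫ ≤ 0 := (norm_eq_iInf_iff_real_inner_le_zero hS hv).1 hinf w hw
  have hexpand : ‖z - w‖ ^ 2 = ‖z - v‖ ^ 2 - 2 * ⟪z - v, w - v⟫ + ‖v - w‖ ^ 2 := by
    rw [show z - w = (z - v) - (w - v) by abel, norm_sub_sq_real, norm_sub_rev w v]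
  nlinarith [sq_nonneg ‖z - v‖]

theorem projected_step_gap_le {f : E → ℝ} {x x' g xstar : E} {α c e M : ℝ} (hα : 0 < α)
    (hg : ‖g‖ ≤ M) (hgap : ⟪g, xstar - x⟫ ≤ c * (f xstar - f x) + e)
    (hproj : ‖x' - xstar‖ ^ 2 ≤ ‖x - α • g - xstar‖ ^ 2) :
    2 * α * c * (f x - f xstar) ≤
      ‖x - xstar‖ ^ 2 - ‖x' - xstar‖ ^ 2 + 2 * α * e + α ^ 2 * M ^ 2 := by
  have hexpand : ‖x - α • g - xstar‖ ^ 2 =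
      ‖x - xstar‖ ^ 2 + 2 * α * ⟪g, xstar - x⟫ + α ^ 2 * ‖g‖ ^ 2 := by
    rw [show x - α • g - xstar = (x - xstar) - α • g by abel, norm_sub_sq_real,
      real_inner_smul_right, norm_smul, Real.norm_of_nonneg hα.le, real_inner_comm,
      ← neg_sub xstar x, inner_neg_right]
    ring
  have hg2 : ‖g‖ ^ 2 ≤ M ^ 2 := pow_le_pow_left₀ (norm_nonneg g) hg 2
  nlinarith [mul_le_mul_of_nonneg_left hg2 (sq_nonneg α)]

theorem projected_step_gap_le_of_schedule {f : E → ℝ} {x x' g xstar : E} {c c₂ μ₀ M : ℝ}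
    (hM : 0 < M) (n : ℕ) (hg : ‖g‖ ≤ M)
    (hgap : ⟪g, xstar - x⟫ ≤ c * (f xstar - f x) + c₂ * (μ₀ / √(n + 1)))
    (hproj : ‖x' - xstar‖ ^ 2 ≤ ‖x - (1 / (M * √(n + 1))) • g - xstar‖ ^ 2) :
    2 * c / √(n + 1) * (f x - f xstar) ≤
      M * (‖x - xstar‖ ^ 2 - ‖x' - xstar‖ ^ 2) + (2 * c₂ * μ₀ + M) / (n + 1) := by
  have hss : √((n : ℝ) + 1) ^ 2 = n + 1 := Real.sq_sqrt (by positivity)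
  have h := mul_le_mul_of_nonneg_left
    (projected_step_gap_le (by positivity) hg hgap hproj) hM.le
  calc 2 * c / √(n + 1) * (f x - f xstar)
      = M * (2 * (1 / (M * √(n + 1))) * c * (f x - f xstar)) := by field_simp
    _ ≤ _ := h
    _ = _ := by
      field_simp
      rw [hss]
      ring

end Projection

theorem sum_Icc_half_div_succ_le {C : ℝ} (hC : 0 ≤ C) (k : ℕ) :
    ∑ i ∈ Icc ((k + 1) / 2) k, C / ((i : ℝ) + 1) ≤ C := by
  have hterm : ∀ i ∈ Icc ((k + 1) / 2) k, C / ((i : ℝ) + 1) ≤ C / (((k + 1) / 2 : ℕ) + 1) :=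
    fun i hi => by gcongr; exact_mod_cast (mem_Icc.1 hi).1
  have hcard : ((#(Icc ((k + 1) / 2) k) : ℕ) : ℝ) ≤ ((k + 1) / 2 : ℕ) + 1 := by
    rw [Nat.card_Icc]; exact_mod_cast (by omega : k + 1 - (k + 1) / 2 ≤ (k + 1) / 2 + 1)
  calc _ ≤ #(Icc ((k + 1) / 2) k) • (C / (((k + 1) / 2 : ℕ) + 1)) := sum_le_card_nsmul _ _ _ hterm
    _ ≤ (((k + 1) / 2 : ℕ) + 1) * (C / (((k + 1) / 2 : ℕ) + 1)) := by
      rw [nsmul_eq_mul]; gcongr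
    _ = C := by field_simp

theorem half_succ_le_card_Icc (k : ℕ) : ((k : ℝ) + 1) / 2 ≤ #(Icc ((k + 1) / 2) k) := by
  rw [Nat.card_Icc, div_le_iff₀ two_pos]
  exact_mod_cast (by omega : k + 1 ≤ (k + 1 - (k + 1) / 2) * 2)

theorem le_half_succ_mul_rate {N c : ℝ} (hN : 0 ≤ N) (hc : 0 < c) (k : ℕ) :
    N ≤ ((k : ℝ) + 1) / 2 * (2 * c / √(k + 1) * (2 * N / (c * √(k + 2)))) := by
  have hs : 0 < √((k : ℝ) + 1) := by positivity
  have hss : √((k : ℝ) + 1) ^ 2 = k + 1 := Real.sq_sqrt (by positivity)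
  have htt : √((k : ℝ) + 2) ^ 2 = k + 2 := Real.sq_sqrt (by positivity)
  have hts : √((k : ℝ) + 2) ≤ 2 * √((k : ℝ) + 1) := by nlinarith
  field_simp
  nlinarith [mul_le_mul_of_nonneg_left hts (mul_nonneg hN hs.le)]

theorem exists_le_of_weighted_descent {a Δ : ℕ → ℝ} {M C c Θ : ℝ} (hM : 0 ≤ M) (hC : 0 ≤ C)
    (hc : 0 < c) (ha : ∀ i, 0 ≤ a i) (haΘ : ∀ i, a i ≤ Θ)
    (hstep : ∀ i : ℕ, 0 < Δ i → 2 * c / √(i + 1) * Δ i ≤ M * (a i - a (i + 1)) + C / (i + 1))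
    (k : ℕ) : ∃ j ≤ k, Δ j ≤ 2 * (M * Θ + C) / (c * √(k + 2)) := by
  by_contra! hgap
  set B := 2 * (M * Θ + C) / (c * √(k + 2))
  set T := Icc ((k + 1) / 2) k
  have hN : 0 ≤ M * Θ + C := by nlinarith [ha 0, haΘ 0]
  have hB : 0 ≤ B := by positivity
  have hgapT : ∀ i ∈ T, B < Δ i := fun i hi => hgap i (mem_Icc.1 hi).2
  have hupper : ∑ i ∈ T, 2 * c / √(i + 1) * Δ i ≤ M * Θ + C := calc
    _ ≤ ∑ i ∈ T, (M * (a i - a (i + 1)) + C / (i + 1)) :=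
      sum_le_sum fun i hi => hstep i (hB.trans_lt (hgapT i hi))
    _ = M * (a ((k + 1) / 2) - a (k + 1)) + ∑ i ∈ T, C / ((i : ℝ) + 1) := by
      have htel := sum_Icc_sub (by omega : (k + 1) / 2 ≤ k) a
      rw [sum_sub_distrib] at htel
      rw [sum_add_distrib, ← mul_sum, sum_sub_distrib]
      congr 2
      linarith
    _ ≤ M * Θ + C := by
      gcongr
      · linarith [ha (k + 1), haΘ ((k + 1) / 2)]
      · exact sum_Icc_half_div_succ_le hC k
  have hlower : #T • (2 * c / √(k + 1) * B) < ∑ i ∈ T, 2 * c / √(i + 1) * Δ i := by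
    rw [← sum_const]
    refine sum_lt_sum_of_nonempty (nonempty_Icc.2 (by omega)) fun i hi => ?_
    have hik : (i : ℝ) ≤ k := by exact_mod_cast (mem_Icc.1 hi).2
    calc 2 * c / √(k + 1) * B ≤ 2 * c / √(i + 1) * B := by gcongr
      _ < 2 * c / √(i + 1) * Δ i := by gcongr; exact hgapT i hi
  have hcount : M * Θ + C ≤ #T • (2 * c / √(k + 1) * B) := by
    rw [nsmul_eq_mul]
    exact (le_half_succ_mul_rate hN hc k).trans (by gcongr; exact half_succ_le_card_Icc k)
  linarith

theorem smoothing_projected_gradient_rate_general {m : ℕ}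
    (S : Set (EuclideanSpace ℝ (Fin m)))
    (hSconv : Convex ℝ S)
    (f : EuclideanSpace ℝ (Fin m) → ℝ)
    (Θ : ℝ) (hΘ : ∀ x ∈ S, ∀ y ∈ S, ‖x - y‖ ^ 2 ≤ Θ)
    (c1 c2 M μ0 : ℝ) (hc1 : 0 < c1) (hc2 : 0 ≤ c2) (hM : 0 < M) (hμ0 : 0 < μ0)
    (proj : EuclideanSpace ℝ (Fin m) → EuclideanSpace ℝ (Fin m))
    (hproj : ∀ z, proj z ∈ S ∧ ∀ w ∈ S, dist (proj z) z ≤ dist w z)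
    (xstar : EuclideanSpace ℝ (Fin m)) (hxstarS : xstar ∈ S)
    (x g : ℕ → EuclideanSpace ℝ (Fin m))
    (hx0 : x 0 ∈ S)
    (hgb : ∀ k, ‖g k‖ ≤ M)
    (hineq : ∀ k, f (x k) > f xstar →
      ⟪g k, xstar - x k⟫ ≤ c1 * (f xstar - f (x k)) + c2 * (μ0 / Real.sqrt (k + 1)))
    (hupdate : ∀ k, x (k + 1) = proj (x k - (1 / (M * Real.sqrt (k + 1))) • g k)) :
    ∀ k : ℕ, 2 ≤ k → ∃ j ≤ k,
      f (x j) - f xstar ≤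
        2 * (M * Θ + (2 * c2 * μ0 + M) * Real.log 3) / (c1 * Real.sqrt (k + 2)) := by
  intro k _
  have hxS : ∀ i, x i ∈ S
    | 0 => hx0
    | i + 1 => hupdate i ▸ (hproj _).1
  have hstep (i : ℕ) (hi : 0 < f (x i) - f xstar) :
      2 * c1 / √(i + 1) * (f (x i) - f xstar) ≤
        M * (‖x i - xstar‖ ^ 2 - ‖x (i + 1) - xstar‖ ^ 2) + (2 * c2 * μ0 + M) / (i + 1) :=
    projected_step_gap_le_of_schedule hM i (hgb i) (hineq i (sub_pos.1 hi))
      (hupdate i ▸ sq_norm_sub_le_of_forall_dist_le hSconv (hproj _).1 hxstarS (hproj _).2)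
  obtain ⟨j, hjk, hj⟩ := exists_le_of_weighted_descent hM.le (by positivity) hc1
    (fun i => sq_nonneg _) (fun i => hΘ _ (hxS i) _ hxstarS) hstep k
  refine ⟨j, hjk, hj.trans ?_⟩
  have hlog : 1 ≤ Real.log 3 :=
    (by norm_num : (1 : ℝ) ≤ 1.0986122885).trans Real.log_three_gt_d9.le
  gcongr
  exact le_mul_of_one_le_right (by positivity) hlog

/-- Convergence rate of the smoothing projected gradient method: under a
pseudoconvexity-type inequality for the smoothed gradients, bounded gradients,
and the stepsize/smoothing schedules `α_k = 1/(M √(k+1))`, `μ_k = μ₀/√(k+1)`,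
the best objective value after `k ≥ 2` iterations satisfies an `O(k^{-1/2})` bound. -/
theorem smoothing_projected_gradient_rate {m : ℕ}
    (S : Set (EuclideanSpace ℝ (Fin m))) (hSne : S.Nonempty) (hScl : IsClosed S)
    (hSconv : Convex ℝ S)
    (f : EuclideanSpace ℝ (Fin m) → ℝ)
    (Θ : ℝ) (hΘ : ∀ x ∈ S, ∀ y ∈ S, ‖x - y‖ ^ 2 ≤ Θ)
    (c1 c2 M μ0 : ℝ) (hc1 : 0 < c1) (hc2 : 0 ≤ c2) (hM : 0 < M) (hμ0 : 0 < μ0)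
    (proj : EuclideanSpace ℝ (Fin m) → EuclideanSpace ℝ (Fin m))
    (hproj : ∀ z, proj z ∈ S ∧ ∀ w ∈ S, dist (proj z) z ≤ dist w z)
    (xstar : EuclideanSpace ℝ (Fin m)) (hxstarS : xstar ∈ S)
    (hxstarmin : ∀ x ∈ S, f xstar ≤ f x)
    (x g : ℕ → EuclideanSpace ℝ (Fin m))
    (hx0 : x 0 ∈ S)
    (hgb : ∀ k, ‖g k‖ ≤ M)
    (hineq : ∀ k, f (x k) > f xstar →
      ⟪g k, xstar - x k⟫ ≤ c1 * (f xstar - f (x k)) + c2 * (μ0 / Real.sqrt (k + 1)))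
    (hupdate : ∀ k, x (k + 1) = proj (x k - (1 / (M * Real.sqrt (k + 1))) • g k)) :
    ∀ k : ℕ, 2 ≤ k → ∃ j ≤ k,
      f (x j) - f xstar ≤
        2 * (M * Θ + (2 * c2 * μ0 + M) * Real.log 3) / (c1 * Real.sqrt (k + 2)) :=
  smoothing_projected_gradient_rate_general S hSconv f Θ hΘ c1 c2 M μ0 hc1 hc2 hM hμ0 proj hproj
    xstar hxstarS x g hx0 hgb hineq hupdate
end
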